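/- arXiv:2308.14443 — 3 statements merged into one kernel-verified Lean document; each statement's English description precedes it below -/
import Mathlib

section
/- In the hypercube Q_d, the set X_p of all vertices whose binary label contains exactly p ones is a mutual-visibility set, for any 0 ≤ p ≤ d. -/
open SimpleGraph

/-- Two vertices are `X`-visible in `G`: some shortest path between them has
no internal vertex in `X`. -/
def IsVisiblePair {V : Type*} (G : SimpleGraph V) (X : Set V) (x y : V) : Prop :=
  ∃ p : G.Walk x y, p.IsPath ∧ p.length = G.dist x y ∧
    ∀ z ∈ p.support, z ∈ X → z = x ∨ z = y

/-- `X` is a mutual-visibility set of `G`. -/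
def MutualVisSet {V : Type*} (G : SimpleGraph V) (X : Set V) : Prop :=
  ∀ x ∈ X, ∀ y ∈ X, IsVisiblePair G X x y

/-- `X` is a total mutual-visibility set of `G`. -/
def TotalMutualVisSet {V : Type*} (G : SimpleGraph V) (X : Set V) : Prop :=
  ∀ x y : V, IsVisiblePair G X x y

/-- The mutual-visibility number `μ(G)`. -/
noncomputable def mutualVisNum {V : Type*} (G : SimpleGraph V) : ℕ :=
  sSup {n | ∃ X : Set V, MutualVisSet G X ∧ X.ncard = n}

/-- The total mutual-visibility number `μₜ(G)`. -/
noncomputable def totalMutualVisNum {V : Type*} (G : SimpleGraph V) : ℕ :=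
  sSup {n | ∃ X : Set V, TotalMutualVisSet G X ∧ X.ncard = n}

/-- A set of vertices is convex: every shortest path in `G` between two of its
vertices has all its vertices in the set. -/
def ConvexSet {V : Type*} (G : SimpleGraph V) (S : Set V) : Prop :=
  ∀ x ∈ S, ∀ y ∈ S, ∀ p : G.Walk x y, p.IsPath → p.length = G.dist x y →
    ∀ z ∈ p.support, z ∈ S

/-- The hypercube `Q_d`: vertices are `{0,1}^d`, adjacency is Hamming distance 1. -/
def Qube (d : ℕ) : SimpleGraph (Fin d → Bool) :=
  SimpleGraph.fromRel (fun x y => hammingDist x y = 1)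

/-! Between two vertices `x`, `y` of weight `p`, walk up from `x` to `x ⊔ y`, switching on one at a
time the coordinates where only `y` is `1`, and then down to `y`. This walk has length
`hammingDist x y`, which is the distance in `Q_d`, so it is a shortest path. Every vertex on it lies
above `x` or above `y`, so it has weight larger than `p` unless it is `x` or `y` itself. -/

section HammingDist

variable {ι : Type*} [Fintype ι]

theorem Function.hammingDist_update_add_one [DecidableEq ι] {β : ι → Type*}
    [∀ i, DecidableEq (β i)] {x y : ∀ i, β i} {i : ι} (hi : x i ≠ y i) :
    hammingDist (Function.update x i (y i)) y + 1 = hammingDist x y := by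
  have : (Finset.univ.filter fun j => Function.update x i (y i) j ≠ y j) =
      (Finset.univ.filter fun j => x j ≠ y j).erase i := by
    ext j
    rcases eq_or_ne j i with rfl | hj <;> simp [*]
  simp only [hammingDist, this]
  exact Finset.card_erase_add_one (by simpa using hi)

theorem Function.hammingDist_update_self [DecidableEq ι] {β : ι → Type*}
    [∀ i, DecidableEq (β i)] {x : ∀ i, β i} {i : ι} {b : β i} (hb : x i ≠ b) :
    hammingDist x (Function.update x i b) = 1 := by
  have : (Finset.univ.filter fun j => x j ≠ Function.update x i b j) = {i} := by
    ext j
    rcases eq_or_ne j i with rfl | hj <;> simp [*]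
  simp only [hammingDist, this, Finset.card_singleton]

theorem hammingDist_add_hammingDist_sup (x y : ι → Bool) :
    hammingDist x (x ⊔ y) + hammingDist (x ⊔ y) y = hammingDist x y := by
  simp only [hammingDist, Finset.card_filter, ← Finset.sum_add_distrib]
  refine Finset.sum_congr rfl fun i _ => ?_
  have key : ∀ a b : Bool,
      ((if a ≠ a ⊔ b then 1 else 0) + if a ⊔ b ≠ b then 1 else 0) = if a ≠ b then 1 else 0 := by
    decide
  exact key (x i) (y i)

theorem Bool.pi_eq_of_le_of_card_filter_le {x y : ι → Bool} (hxy : x ≤ y)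
    (h : (Finset.univ.filter fun i => y i = true).card ≤
      (Finset.univ.filter fun i => x i = true).card) : x = y := by
  have hsub : (Finset.univ.filter fun i => x i = true) ⊆ Finset.univ.filter fun i => y i = true := by
    intro i
    simpa using fun hi => Bool.le_iff_imp.mp (hxy i) hi
  have hset := Finset.eq_of_subset_of_card_le hsub h
  funext i
  simpa using congrArg (i ∈ ·) hset

end HammingDist

namespace Qube

variable {d : ℕ}

theorem adj_iff {x y : Fin d → Bool} : (Qube d).Adj x y ↔ hammingDist x y = 1 := by
  rw [Qube, fromRel_adj, hammingDist_comm y x, or_self, and_iff_right_iff_imp]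
  rintro h rfl
  simp at h

theorem hammingDist_le_length {x y : Fin d → Bool} (w : (Qube d).Walk x y) :
    hammingDist x y ≤ w.length := by
  induction w with
  | nil => simp
  | @cons a b c h w ih =>
    calc hammingDist a c ≤ hammingDist a b + hammingDist b c := hammingDist_triangle _ _ _
      _ ≤ 1 + w.length := by rw [adj_iff.mp h]; omega
      _ = (Walk.cons h w).length := by rw [Walk.length_cons, add_comm]

theorem exists_walk_of_le {x y : Fin d → Bool} (hxy : x ≤ y) :
    ∃ w : (Qube d).Walk x y, w.length = hammingDist x y ∧ ∀ z ∈ w.support, x ≤ z := by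
  induction h : hammingDist x y generalizing x with
  | zero =>
    obtain rfl := hammingDist_eq_zero.mp h
    exact ⟨.nil, rfl, by simp⟩
  | succ n ih =>
    obtain ⟨i, hi⟩ : ∃ i, x i ≠ y i := Function.ne_iff.mp (hammingDist_ne_zero.mp (by omega))
    have hdist := Function.hammingDist_update_add_one hi
    set x' := Function.update x i (y i)
    have hadj : (Qube d).Adj x x' := adj_iff.mpr (Function.hammingDist_update_self hi)
    obtain ⟨w, hw, hw_supp⟩ := ih (x := x') (update_le_iff.mpr ⟨le_rfl, fun j _ => hxy j⟩) (by omega)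
    refine ⟨.cons hadj w, by simp [hw], ?_⟩
    simp only [Walk.support_cons, List.mem_cons, forall_eq_or_imp]
    exact ⟨le_rfl, fun z hz => (le_update_self_iff.mpr (hxy i)).trans (hw_supp z hz)⟩

theorem exists_walk_through_sup (x y : Fin d → Bool) :
    ∃ w : (Qube d).Walk x y, w.length = hammingDist x y ∧ ∀ z ∈ w.support, x ≤ z ∨ y ≤ z := by
  obtain ⟨u, hu, hu_supp⟩ := exists_walk_of_le (le_sup_left : x ≤ x ⊔ y)
  obtain ⟨v, hv, hv_supp⟩ := exists_walk_of_le (le_sup_right : y ≤ x ⊔ y)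
  refine ⟨u.append v.reverse, ?_, fun z hz => ?_⟩
  · rw [Walk.length_append, Walk.length_reverse, hu, hv, hammingDist_comm y,
      hammingDist_add_hammingDist_sup]
  · rw [Walk.mem_support_append_iff, Walk.support_reverse, List.mem_reverse] at hz
    exact hz.imp (hu_supp z) (hv_supp z)

theorem dist_eq_hammingDist (x y : Fin d → Bool) : (Qube d).dist x y = hammingDist x y := by
  obtain ⟨w, hw, -⟩ := exists_walk_through_sup x y
  obtain ⟨w', hw'⟩ := w.reachable.exists_walk_length_eq_dist
  exact le_antisymm (hw ▸ dist_le w) (hw' ▸ hammingDist_le_length w')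

end Qube

theorem layer_mutualVisSet_general (d p : ℕ) :
    MutualVisSet (Qube d)
      {x : Fin d → Bool | (Finset.univ.filter fun i => x i = true).card = p} := by
  intro x hx y hy
  obtain ⟨w, hw, hw_supp⟩ := Qube.exists_walk_through_sup x y
  have hw_dist : w.length = (Qube d).dist x y := by rw [hw, Qube.dist_eq_hammingDist]
  refine ⟨w, w.isPath_of_length_eq_dist hw_dist, hw_dist, fun z hz hzX => ?_⟩
  rw [Set.mem_ofPred_eq] at hx hy hzX
  rcases hw_supp z hz with hxz | hyz
  · exact .inl (Bool.pi_eq_of_le_of_card_filter_le hxz (by omega)).symm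
  · exact .inr (Bool.pi_eq_of_le_of_card_filter_le hyz (by omega)).symm

/-- In `Q_d`, the set of all vertices with exactly `p` ones is a
mutual-visibility set, for any `0 ≤ p ≤ d`. -/
theorem layer_mutualVisSet (d p : ℕ) (hp : p ≤ d) :
    MutualVisSet (Qube d)
      {x : Fin d → Bool | (Finset.univ.filter fun i => x i = true).card = p} :=
  layer_mutualVisSet_general d p
end

section
/- The mutual-visibility number of the d-dimensional butterfly equals μ(BF(d)) = 2^{d+1} - 2, for all d ≥ 2. -/
open SimpleGraph

/-- The butterfly graph `BF(d)`: vertices `[ℓ, c]` with level `ℓ : Fin (d+1)`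
and column `c : Fin d → Bool`; `[ℓ,c]` and `[ℓ+1,c']` are adjacent iff `c` and
`c'` agree on every bit other than bit `ℓ` (so `c = c'` or they differ exactly
in bit `ℓ`). -/
def BF (d : ℕ) : SimpleGraph (Fin (d + 1) × (Fin d → Bool)) :=
  SimpleGraph.fromRel (fun u v =>
    (u.1 : ℕ) + 1 = (v.1 : ℕ) ∧ ∀ i : Fin d, (i : ℕ) ≠ (u.1 : ℕ) → u.2 i = v.2 i)

/-!
Order the vertices by `u ≤ v` when a path going down one level per step leads from `u` to `v`;
such a monotone path is then the unique shortest `u`–`v` path. The maximal chains are the `4^d`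
lines from level `0` to level `d`, each vertex lies on `2^d` of them, so an antichain has at most
`2^d` vertices. A mutual-visibility set `X` contains no chain of three vertices, hence it is the
union of the antichains of its minimal and of its maximal elements, and `|X| ≤ 2^(d+1)`.

If the maximal elements of `X` meet every line, every other point `z` of `X` is blocked: each
monotone path from `z` down to level `d` meets `X` again. Take two such points above a common
vertex of level `d`, `z` on the smaller level. If their last bits differ, a shortest path between
them runs from `z` monotonically down to level `d` and is blocked. So the non-maximal points above
a vertex of level `d` share their last bit, at most half of the lines meet them, and
`|X| ≤ 3 · 2^(d-1)`. Minimal elements are handled by the mirror symmetry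
`[ℓ, c] ↦ [d - ℓ, c ∘ reverse]`. Otherwise both antichains have fewer than `2^d` elements.

Levels `0` and `d`, each without one vertex, attain the bound: two vertices of level `0` whose
columns differ in the last bit see each other through the missing vertex of level `d`.
-/

open Finset

section Visibility

variable {V W : Type*} {G : SimpleGraph V} {H : SimpleGraph W}

theorem SimpleGraph.Iso.dist_le (e : G ≃g H) (u v : V) : H.dist (e u) (e v) ≤ G.dist u v := by
  by_cases h : G.Reachable u v
  · obtain ⟨p, hp⟩ := h.exists_walk_length_eq_dist
    calc H.dist (e u) (e v) ≤ (p.map e.toHom).length := SimpleGraph.dist_le _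
      _ = G.dist u v := by rw [Walk.length_map, hp]
  · rw [dist_eq_zero_of_not_reachable (Iso.reachable_iff.not.mpr h)]
    exact Nat.zero_le _

theorem SimpleGraph.Iso.dist_eq (e : G ≃g H) (u v : V) : H.dist (e u) (e v) = G.dist u v := by
  refine le_antisymm (e.dist_le u v) ?_
  simpa using e.symm.dist_le (e u) (e v)

theorem isVisiblePair_self (X : Set V) (x : V) : IsVisiblePair G X x x :=
  ⟨.nil, .nil, by simp, by simp⟩

theorem IsVisiblePair.symm {X : Set V} {x y : V} (h : IsVisiblePair G X x y) :
    IsVisiblePair G X y x := by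
  obtain ⟨p, hp, hlen, hX⟩ := h
  refine ⟨p.reverse, hp.reverse, by rw [Walk.length_reverse, hlen, dist_comm], fun z hz => ?_⟩
  rw [Walk.support_reverse, List.mem_reverse] at hz
  exact fun hzX => (hX z hz hzX).symm

theorem IsVisiblePair.image_iso (e : G ≃g H) {X : Set V} {x y : V}
    (h : IsVisiblePair G X x y) : IsVisiblePair H (e '' X) (e x) (e y) := by
  obtain ⟨p, hp, hlen, hX⟩ := h
  refine ⟨p.map e.toHom, hp.map e.injective, by rw [Walk.length_map, hlen, e.dist_eq], ?_⟩
  rintro _ hz ⟨z, hzX, rfl⟩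
  rw [Walk.support_map, List.mem_map] at hz
  obtain ⟨z', hz', hzz'⟩ := hz
  obtain rfl := e.injective hzz'
  rcases hX z' hz' hzX with rfl | rfl
  · exact .inl rfl
  · exact .inr rfl

theorem MutualVisSet.image_iso (e : G ≃g H) {X : Set V} (h : MutualVisSet G X) :
    MutualVisSet H (e '' X) := by
  rintro _ ⟨x, hx, rfl⟩ _ ⟨y, hy, rfl⟩
  exact (h x hx y hy).image_iso e

end Visibility

namespace Butterfly

abbrev Col (d : ℕ) := Fin d → Bool

abbrev Vert (d : ℕ) := Fin (d + 1) × Col d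

variable {d : ℕ}

/-- `v` is reached from `u` by a path going down one level per step. -/
def Descends (u v : Vert d) : Prop :=
  (u.1 : ℕ) ≤ v.1 ∧ ∀ t : Fin d, ((t : ℕ) < u.1 ∨ (v.1 : ℕ) ≤ t) → u.2 t = v.2 t

instance : DecidableRel (Descends (d := d)) := fun _ _ => by
  unfold Descends; infer_instance

theorem Descends.refl (u : Vert d) : Descends u u := ⟨le_rfl, fun _ _ => rfl⟩

theorem Descends.trans {u v w : Vert d} (huv : Descends u v) (hvw : Descends v w) :
    Descends u w := by
  have := huv.1
  have := hvw.1
  refine ⟨by omega, fun t ht => (huv.2 t ?_).trans (hvw.2 t ?_)⟩ <;> omega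

theorem eq_of_descends_of_level_eq {u v y z : Vert d} (huy : Descends u y) (hyv : Descends y v)
    (huz : Descends u z) (hzv : Descends z v) (h : (y.1 : ℕ) = z.1) : y = z := by
  refine Prod.ext (Fin.ext h) (funext fun t => ?_)
  by_cases ht : (t : ℕ) < y.1
  · rw [hyv.2 t (.inl ht), hzv.2 t (.inl (by omega))]
  · rw [← huy.2 t (.inr (by omega)), ← huz.2 t (.inr (by omega))]

theorem Descends.eq_of_level_eq {u v : Vert d} (h : Descends u v) (hl : (u.1 : ℕ) = v.1) :
    u = v :=
  eq_of_descends_of_level_eq (.refl u) h h (.refl v) hl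

theorem Descends.antisymm {u v : Vert d} (huv : Descends u v) (hvu : Descends v u) : u = v :=
  huv.eq_of_level_eq (le_antisymm huv.1 hvu.1)

theorem adj_iff {u v : Vert d} : (BF d).Adj u v ↔
    ((u.1 : ℕ) + 1 = v.1 ∧ Descends u v) ∨ ((v.1 : ℕ) + 1 = u.1 ∧ Descends v u) := by
  have key : ∀ a b : Vert d, (a.1 : ℕ) + 1 = b.1 →
      ((∀ i : Fin d, (i : ℕ) ≠ a.1 → a.2 i = b.2 i) ↔ Descends a b) := fun a b hab =>
    ⟨fun h => ⟨by omega, fun t ht => h t (by omega)⟩, fun h t ht => h.2 t (by omega)⟩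
  rw [BF, fromRel_adj]
  constructor
  · rintro ⟨-, ⟨h, hb⟩ | ⟨h, hb⟩⟩
    · exact .inl ⟨h, (key u v h).1 hb⟩
    · exact .inr ⟨h, (key v u h).1 hb⟩
  · rintro (⟨h, hb⟩ | ⟨h, hb⟩)
    · exact ⟨fun huv => by simp [huv] at h, .inl ⟨h, (key u v h).2 hb⟩⟩
    · exact ⟨fun huv => by simp [huv] at h, .inr ⟨h, (key v u h).2 hb⟩⟩

theorem level_le_level_add_length {u v : Vert d} (p : (BF d).Walk u v) :
    (v.1 : ℕ) ≤ u.1 + p.length := by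
  induction p with
  | nil => simp
  | cons h _ ih =>
    rw [Walk.length_cons]
    rcases adj_iff.1 h with ⟨h, -⟩ | ⟨h, -⟩ <;> omega

theorem exists_mem_support_level_eq {u v : Vert d} (p : (BF d).Walk u v) (m : ℕ)
    (hu : (u.1 : ℕ) ≤ m) (hv : m ≤ v.1) : ∃ y ∈ p.support, (y.1 : ℕ) = m := by
  induction p with
  | nil => exact ⟨_, Walk.start_mem_support _, by omega⟩
  | @cons a b _ h q ih =>
    rcases hu.eq_or_lt with rfl | hlt
    · exact ⟨a, Walk.start_mem_support _, rfl⟩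
    · have hb : (b.1 : ℕ) ≤ m := by rcases adj_iff.1 h with ⟨h, -⟩ | ⟨h, -⟩ <;> omega
      obtain ⟨y, hy, hym⟩ := ih hb hv
      exact ⟨y, by simp [hy], hym⟩

theorem bit_eq_of_forall_level_le {u v : Vert d} (p : (BF d).Walk u v) (t : Fin d)
    (hp : ∀ y ∈ p.support, (y.1 : ℕ) ≤ t) : u.2 t = v.2 t := by
  induction p with
  | nil => rfl
  | @cons a b _ h q ih =>
    have ha := hp a (by simp)
    have hb := hp b (by simp)
    rw [← ih fun y hy => hp y (by simp [hy])]
    rcases adj_iff.1 h with ⟨h, hab⟩ | ⟨h, hba⟩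
    · exact hab.2 t (.inr (by omega))
    · exact (hba.2 t (.inr (by omega))).symm

theorem exists_mem_support_lt_level {u v : Vert d} (p : (BF d).Walk u v) {t : Fin d}
    (ht : u.2 t ≠ v.2 t) : ∃ y ∈ p.support, (t : ℕ) < y.1 := by
  by_contra! h
  exact ht (bit_eq_of_forall_level_le p t h)

theorem length_ge_of_bit_ne {u v : Vert d} (p : (BF d).Walk u v) {t : Fin d}
    (ht : u.2 t ≠ v.2 t) : ((t : ℕ) + 1 - u.1) + ((t : ℕ) + 1 - v.1) ≤ p.length := by
  obtain ⟨y, hy, hty⟩ := exists_mem_support_lt_level p ht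
  have h₁ := level_le_level_add_length (p.takeUntil y hy)
  have h₂ := level_le_level_add_length (p.dropUntil y hy).reverse
  have hlen := congrArg Walk.length (p.take_spec hy)
  rw [Walk.length_append] at hlen
  rw [Walk.length_reverse] at h₂
  omega

theorem descends_of_length_le {u v : Vert d} (p : (BF d).Walk u v)
    (hp : (u.1 : ℕ) + p.length ≤ v.1) : ∀ y ∈ p.support, Descends u y ∧ Descends y v := by
  induction p with
  | nil => simpa using Descends.refl _
  | @cons a b _ h q ih =>
    have hq := level_le_level_add_length q
    rw [Walk.length_cons] at hp
    obtain ⟨hl, hab⟩ : (a.1 : ℕ) + 1 = b.1 ∧ Descends a b := by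
      rcases adj_iff.1 h with h | ⟨h, -⟩
      · exact h
      · omega
    have ih := ih (by omega)
    intro y hy
    rcases List.mem_cons.1 (Walk.support_cons h q ▸ hy) with rfl | hy
    · exact ⟨.refl _, hab.trans (ih b (Walk.start_mem_support _)).2⟩
    · exact ⟨hab.trans (ih y hy).1, (ih y hy).2⟩

theorem mem_support_of_descends {u v z : Vert d} (p : (BF d).Walk u v)
    (hp : (u.1 : ℕ) + p.length ≤ v.1) (huz : Descends u z) (hzv : Descends z v) :
    z ∈ p.support := by
  obtain ⟨y, hy, hyz⟩ := exists_mem_support_level_eq p z.1 huz.1 hzv.1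
  obtain ⟨huy, hyv⟩ := descends_of_length_le p hp y hy
  rwa [eq_of_descends_of_level_eq huy hyv huz hzv hyz] at hy

theorem Descends.exists_walk {u v : Vert d} (h : Descends u v) :
    ∃ p : (BF d).Walk u v, p.length = v.1 - u.1 := by
  suffices ∀ n, ∀ u : Vert d, Descends u v → (v.1 : ℕ) = u.1 + n →
      ∃ p : (BF d).Walk u v, p.length = n from this _ u h (by have := h.1; omega)
  intro n
  induction n with
  | zero =>
    intro u hu hn
    obtain rfl := hu.eq_of_level_eq (by omega)
    exact ⟨.nil, rfl⟩
  | succ n ih =>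
    intro u hu hn
    let u' : Vert d := (⟨u.1 + 1, by omega⟩, fun t => if (t : ℕ) = u.1 then v.2 t else u.2 t)
    have hadj : (BF d).Adj u u' := by
      refine adj_iff.2 (.inl ⟨rfl, by simp [u'], fun t ht => ?_⟩)
      simp only [u'] at ht ⊢
      rw [if_neg (by omega)]
    have hu'v : Descends u' v := by
      refine ⟨by simp only [u']; omega, fun t ht => ?_⟩
      simp only [u'] at ht ⊢
      split_ifs with h
      · rfl
      · exact hu.2 t (by omega)
    obtain ⟨q, hq⟩ := ih u' hu'v (by simp only [u']; omega)
    exact ⟨.cons hadj q, by simp [hq]⟩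

theorem Descends.dist_eq {u v : Vert d} (h : Descends u v) : (BF d).dist u v = v.1 - u.1 := by
  obtain ⟨p, hp⟩ := h.exists_walk
  obtain ⟨q, hq⟩ := (Walk.reachable p).exists_walk_length_eq_dist
  have := level_le_level_add_length q
  have := dist_le p
  omega

theorem dist_le_of_descends {u v m : Vert d} (hu : Descends u m) (hv : Descends v m) :
    (BF d).dist u v ≤ ((m.1 : ℕ) - u.1) + ((m.1 : ℕ) - v.1) := by
  obtain ⟨p, hp⟩ := hu.exists_walk
  obtain ⟨q, hq⟩ := hv.exists_walk
  calc (BF d).dist u v ≤ (p.append q.reverse).length := dist_le _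
    _ = ((m.1 : ℕ) - u.1) + ((m.1 : ℕ) - v.1) := by
      rw [Walk.length_append, Walk.length_reverse, hp, hq]

/-! ### Lines -/

def top (c : Col d) : Vert d := (0, c)

def bot (c : Col d) : Vert d := (Fin.last d, c)

@[simp] theorem descends_top_iff {c : Col d} {z : Vert d} :
    Descends (top c) z ↔ ∀ t : Fin d, (z.1 : ℕ) ≤ t → c t = z.2 t := by
  simp [Descends, top]

@[simp] theorem descends_bot_iff {c : Col d} {z : Vert d} :
    Descends z (bot c) ↔ ∀ t : Fin d, (t : ℕ) < z.1 → z.2 t = c t := by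
  simp only [Descends, bot, Fin.val_last]
  exact ⟨fun h t ht => h.2 t (.inl ht), fun h => ⟨by omega, fun t ht => h t (by omega)⟩⟩

theorem descends_top_bot (a b : Col d) : Descends (top a) (bot b) :=
  ⟨Nat.zero_le _, fun t ht => by
    have := t.isLt
    simp only [top, bot, Fin.val_zero, Fin.val_last] at ht
    omega⟩

/-- The line `L = (c, c')` is the monotone path from `top c` down to `bot c'`. -/
def OnLine (L : Col d × Col d) (z : Vert d) : Prop :=
  Descends (top L.1) z ∧ Descends z (bot L.2)

instance (L : Col d × Col d) : DecidablePred (OnLine L) := fun _ => by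
  unfold OnLine; infer_instance

theorem OnLine.descends_or {L : Col d × Col d} {z w : Vert d} (hz : OnLine L z)
    (hw : OnLine L w) : Descends z w ∨ Descends w z := by
  wlog h : (z.1 : ℕ) ≤ w.1 generalizing z w
  · exact (this hw hz (by omega)).symm
  simp only [OnLine, descends_top_iff, descends_bot_iff] at hz hw
  refine .inl ⟨h, fun t ht => ?_⟩
  rcases ht with ht | ht
  · rw [hz.2 t ht, hw.2 t (by omega)]
  · rw [← hz.1 t (by omega), hw.1 t ht]

def linesThrough (z : Vert d) : Finset (Col d × Col d) := univ.filter (OnLine · z)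

theorem card_linesThrough (z : Vert d) : #(linesThrough z) = 2 ^ d := by
  have : #(univ : Finset (Col d)) = 2 ^ d := by simp
  rw [← this]
  refine card_nbij' (fun L t => if (t : ℕ) < z.1 then L.1 t else L.2 t)
    (fun f => (fun t => if (t : ℕ) < z.1 then f t else z.2 t,
      fun t => if (t : ℕ) < z.1 then z.2 t else f t))
    (by simp) (fun f _ => ?_) (fun L hL => ?_) (fun f _ => ?_)
  · simp only [linesThrough, OnLine, mem_coe, mem_filter, mem_univ, true_and, descends_top_iff,
      descends_bot_iff]
    constructor
    · intro t ht; rw [if_neg (by omega)]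
    · intro t ht; rw [if_pos ht]
  · simp only [linesThrough, OnLine, mem_coe, mem_filter, mem_univ, true_and, descends_top_iff,
      descends_bot_iff] at hL
    ext t <;> dsimp only <;> split_ifs with ht
    · rfl
    · exact (hL.1 t (by omega)).symm
    · exact hL.2 t ht
    · rfl
  · ext t
    dsimp only
    split_ifs <;> rfl

theorem card_biUnion_linesThrough {A : Finset (Vert d)}
    (hA : IsAntichain Descends (A : Set (Vert d))) :
    #(A.biUnion linesThrough) = #A * 2 ^ d := by
  rw [card_biUnion, sum_const_nat fun z _ => card_linesThrough z]
  intro z hz w hw hzw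
  refine disjoint_left.2 fun L hLz hLw => ?_
  simp only [linesThrough, mem_filter, mem_univ, true_and] at hLz hLw
  rcases hLz.descends_or hLw with h | h
  · exact hA hz hw hzw h
  · exact hA hw hz (Ne.symm hzw) h

theorem card_le_of_isAntichain {A : Finset (Vert d)}
    (hA : IsAntichain Descends (A : Set (Vert d))) : #A ≤ 2 ^ d := by
  have := card_biUnion_linesThrough hA ▸ card_le_univ (A.biUnion linesThrough)
  simp only [Fintype.card_prod, Fintype.card_fun, Fintype.card_bool, Fintype.card_fin] at this
  exact Nat.le_of_mul_le_mul_right this (by positivity)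

theorem biUnion_linesThrough_eq_univ {A : Finset (Vert d)}
    (hA : IsAntichain Descends (A : Set (Vert d))) (hcard : #A = 2 ^ d) :
    A.biUnion linesThrough = univ := by
  apply eq_univ_of_card
  simp [card_biUnion_linesThrough hA, hcard]

/-! ### Mirror symmetry -/

def mirror (z : Vert d) : Vert d := (z.1.rev, z.2 ∘ Fin.rev)

theorem mirror_mirror (z : Vert d) : mirror (mirror z) = z := by
  simp [mirror, Function.comp_def]

theorem mirror_injective : Function.Injective (mirror (d := d)) :=
  Function.LeftInverse.injective mirror_mirror

theorem mirror_top (c : Col d) : mirror (top c) = bot (c ∘ Fin.rev) := rfl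

theorem mirror_bot (c : Col d) : mirror (bot c) = top (c ∘ Fin.rev) := by
  simp [mirror, top, bot]

theorem descends_mirror_iff {u v : Vert d} : Descends (mirror u) (mirror v) ↔ Descends v u := by
  simp only [Descends, mirror, Fin.val_rev, Function.comp_apply]
  have hu := u.1.isLt
  have hv := v.1.isLt
  refine and_congr (by omega) ⟨fun h t ht => ?_, fun h t ht => ?_⟩
  · have := h t.rev (by rw [Fin.val_rev]; omega)
    rwa [Fin.rev_rev, eq_comm] at this
  · exact (h t.rev (by rw [Fin.val_rev]; omega)).symm

theorem adj_mirror_iff {u v : Vert d} : (BF d).Adj (mirror u) (mirror v) ↔ (BF d).Adj u v := by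
  have hu := u.1.isLt
  have hv := v.1.isLt
  simp only [adj_iff, descends_mirror_iff]
  simp only [mirror, Fin.val_rev]
  constructor <;> rintro (⟨h, h'⟩ | ⟨h, h'⟩)
  · exact .inr ⟨by omega, h'⟩
  · exact .inl ⟨by omega, h'⟩
  · exact .inr ⟨by omega, h'⟩
  · exact .inl ⟨by omega, h'⟩

def mirrorIso : BF d ≃g BF d where
  toEquiv := Function.Involutive.toPerm mirror mirror_mirror
  map_rel_iff' := adj_mirror_iff

theorem coe_mirrorIso : ⇑(mirrorIso (d := d)) = mirror := rfl

/-! ### Upper bound -/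

theorem eq_or_eq_of_descends {X : Set (Vert d)} (hX : MutualVisSet (BF d) X) {a z w : Vert d}
    (ha : a ∈ X) (hz : z ∈ X) (hw : w ∈ X) (haz : Descends a z) (hzw : Descends z w) :
    z = a ∨ z = w := by
  obtain ⟨p, -, hp, hpX⟩ := hX a ha w hw
  have haw := haz.trans hzw
  have hmono : (a.1 : ℕ) + p.length ≤ w.1 := by
    rw [hp, haw.dist_eq]
    have := haw.1
    omega
  exact hpX z (mem_support_of_descends p hmono haz hzw) hz

def tops (X : Finset (Vert d)) : Finset (Vert d) :=
  X.filter fun z => ∀ w ∈ X, Descends w z → w = z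

def bottoms (X : Finset (Vert d)) : Finset (Vert d) :=
  X.filter fun z => ∀ w ∈ X, Descends z w → w = z

theorem bottoms_subset (X : Finset (Vert d)) : bottoms X ⊆ X := filter_subset _ _

theorem isAntichain_tops (X : Finset (Vert d)) : IsAntichain Descends (tops X : Set (Vert d)) :=
  fun _ ha _ hb hab h => hab ((mem_filter.1 hb).2 _ (mem_filter.1 ha).1 h)

theorem isAntichain_bottoms (X : Finset (Vert d)) :
    IsAntichain Descends (bottoms X : Set (Vert d)) :=
  fun _ ha _ hb hab h => hab ((mem_filter.1 ha).2 _ (mem_filter.1 hb).1 h).symm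

variable {X : Finset (Vert d)}

theorem subset_tops_union_bottoms (hX : MutualVisSet (BF d) (X : Set (Vert d))) :
    X ⊆ tops X ∪ bottoms X := by
  intro z hz
  by_contra h
  simp only [tops, bottoms, mem_union, mem_filter, hz, true_and, not_or, not_forall] at h
  obtain ⟨⟨a, ha, haz, haz'⟩, ⟨w, hw, hzw, hzw'⟩⟩ := h
  rcases eq_or_eq_of_descends hX ha hz hw haz hzw with h | h
  · exact haz' h.symm
  · exact hzw' h.symm

def BlockedBelow (X : Set (Vert d)) (z : Vert d) : Prop :=
  ∀ c, Descends z (bot c) → ∃ v ∈ X, v ≠ z ∧ Descends z v ∧ Descends v (bot c)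

/-- A shortest path from `z` to a vertex differing from it in the last bit starts with a monotone
path from `z` down to the last level, and that path meets `X` when `z` is blocked. -/
theorem bit_eq_of_blockedBelow {X : Set (Vert d)} (hX : MutualVisSet (BF d) X) {z w : Vert d}
    (hz : z ∈ X) (hw : w ∈ X) (hblock : BlockedBelow X z) (hzw : (z.1 : ℕ) ≤ w.1)
    (hlow : ∀ t : Fin d, (t : ℕ) < z.1 → z.2 t = w.2 t) (i : Fin d) (hi : (i : ℕ) + 1 = d)
    (hwi : (w.1 : ℕ) ≤ i) : z.2 i = w.2 i := by
  by_contra hne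
  obtain ⟨p, -, hp, hpX⟩ := hX z hz w hw
  have hpd : p.length ≤ (d - z.1) + (d - w.1) := by
    let b : Col d := fun t => if (t : ℕ) < w.1 then w.2 t else z.2 t
    have hzb : Descends z (bot b) := descends_bot_iff.2 fun t ht => by
      simp only [b]
      rw [if_pos (by omega), hlow t ht]
    have hwb : Descends w (bot b) := descends_bot_iff.2 fun t ht => by
      simp only [b]
      rw [if_pos ht]
    simpa [hp, bot] using dist_le_of_descends hzb hwb
  obtain ⟨y, hy, hiy⟩ := exists_mem_support_lt_level p hne
  have hyd : (y.1 : ℕ) = d := by have := y.1.isLt; omega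
  have h₁ := level_le_level_add_length (p.dropUntil y hy).reverse
  have hlen := congrArg Walk.length (p.take_spec hy)
  rw [Walk.length_append] at hlen
  rw [Walk.length_reverse] at h₁
  have hmono : (z.1 : ℕ) + (p.takeUntil y hy).length ≤ y.1 := by omega
  have hzy := (descends_of_length_le _ hmono y (Walk.end_mem_support _)).1
  have hy : y = bot y.2 := Prod.ext (Fin.ext (by simp [bot, hyd])) rfl
  obtain ⟨v, hvX, hvz, hzv, hvy⟩ := hblock y.2 (hy ▸ hzy)
  have hv : v ∈ p.support :=
    p.support_takeUntil_subset_support _ (mem_support_of_descends _ hmono hzv (hy ▸ hvy))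
  rcases hpX v hv hvX with rfl | rfl
  · exact hvz rfl
  · exact hne (hzv.2 i (.inr hwi))

theorem blockedBelow_of_mem_sdiff_bottoms (hL : (bottoms X).biUnion linesThrough = univ)
    {z : Vert d} (hz : z ∈ X \ bottoms X) : BlockedBelow X z := by
  rw [mem_sdiff] at hz
  intro c hzc
  obtain ⟨m, hm, hmL⟩ : ∃ m ∈ bottoms X, OnLine (z.2, c) m := by
    have := mem_univ (z.2, c)
    rw [← hL, mem_biUnion] at this
    simpa [linesThrough] using this
  have hzL : OnLine (z.2, c) z := ⟨descends_top_iff.2 fun _ _ => rfl, hzc⟩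
  have hmz : m ≠ z := fun h => hz.2 (h ▸ hm)
  rcases hzL.descends_or hmL with hzm | hmz'
  · exact ⟨m, (mem_filter.1 hm).1, hmz, hzm, hmL.2⟩
  · exact absurd ((mem_filter.1 hm).2 z hz.1 hmz').symm hmz

theorem level_lt_of_mem_sdiff_bottoms {z : Vert d} (hz : z ∈ X \ bottoms X) :
    (z.1 : ℕ) < d := by
  simp only [bottoms, mem_sdiff, mem_filter, not_and, not_forall] at hz
  obtain ⟨w, hw, hzw, hwz⟩ := hz.2 hz.1
  by_contra h
  exact hwz (hzw.eq_of_level_eq (by have := w.1.isLt; have := hzw.1; omega)).symm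

theorem sdiff_bottoms_subset_tops (hX : MutualVisSet (BF d) (X : Set (Vert d))) :
    X \ bottoms X ⊆ tops X := fun _ hz =>
  (mem_union.1 (subset_tops_union_bottoms hX (mem_sdiff.1 hz).1)).resolve_right (mem_sdiff.1 hz).2

theorem bit_eq_of_mem_sdiff_bottoms (hX : MutualVisSet (BF d) (X : Set (Vert d)))
    (hL : (bottoms X).biUnion linesThrough = univ) {z w : Vert d} (hz : z ∈ X \ bottoms X)
    (hw : w ∈ X \ bottoms X) {c : Col d} (hzc : Descends z (bot c)) (hwc : Descends w (bot c))
    (i : Fin d) (hi : (i : ℕ) + 1 = d) : z.2 i = w.2 i := by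
  wlog h : (z.1 : ℕ) ≤ w.1 generalizing z w
  · exact (this hw hz hwc hzc (by omega)).symm
  rw [descends_bot_iff] at hzc hwc
  exact bit_eq_of_blockedBelow hX (mem_sdiff.1 hz).1 (mem_sdiff.1 hw).1
    (blockedBelow_of_mem_sdiff_bottoms hL hz) h
    (fun t ht => (hzc t ht).trans (hwc t (by omega)).symm) i hi
    (by have := level_lt_of_mem_sdiff_bottoms hw; omega)

/-- Flipping the last bit of the top column maps lines through `X \ bottoms X` to lines
avoiding it, so at most half of all lines meet `X \ bottoms X`. -/
theorem two_mul_card_sdiff_bottoms_le (hX : MutualVisSet (BF d) (X : Set (Vert d)))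
    (hL : (bottoms X).biUnion linesThrough = univ) (hd : 0 < d) :
    2 * #(X \ bottoms X) ≤ 2 ^ d := by
  let i : Fin d := ⟨d - 1, by omega⟩
  have hi : (i : ℕ) + 1 = d := by simp only [i]; omega
  let flipBit : Col d × Col d → Col d × Col d := fun L => (Function.update L.1 i !(L.1 i), L.2)
  have hflip : Function.Involutive flipBit := fun L => by simp [flipBit]
  set S := (X \ bottoms X).biUnion linesThrough
  have hdisj : Disjoint S (S.image flipBit) := by
    refine disjoint_left.2 fun L hL₁ hL₂ => ?_
    obtain ⟨L', hL', rfl⟩ := mem_image.1 hL₂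
    simp only [S, mem_biUnion, linesThrough, mem_filter, mem_univ, true_and] at hL₁ hL'
    obtain ⟨z, hz, hzL, hzc⟩ := hL₁
    obtain ⟨w, hw, hwL, hwc⟩ := hL'
    have hzi := descends_top_iff.1 hzL i (by have := level_lt_of_mem_sdiff_bottoms hz; omega)
    have hwi := descends_top_iff.1 hwL i (by have := level_lt_of_mem_sdiff_bottoms hw; omega)
    have := bit_eq_of_mem_sdiff_bottoms hX hL hz hw hzc hwc i hi
    simp only [flipBit, Function.update_self] at hzi
    rw [← hzi, ← hwi] at this
    exact Bool.not_ne_self _ this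
  have hS : #(X \ bottoms X) * 2 ^ d = #S :=
    (card_biUnion_linesThrough ((isAntichain_tops X).subset (sdiff_bottoms_subset_tops hX))).symm
  refine Nat.le_of_mul_le_mul_right (?_ : _ * 2 ^ d ≤ 2 ^ d * 2 ^ d) (by positivity)
  calc 2 * #(X \ bottoms X) * 2 ^ d = #S + #(S.image flipBit) := by
        rw [card_image_of_injective _ hflip.injective, mul_assoc, hS, two_mul]
    _ = #(S ∪ S.image flipBit) := (card_union_of_disjoint hdisj).symm
    _ ≤ 2 ^ d * 2 ^ d := by simpa using card_le_univ (S ∪ S.image flipBit)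

theorem two_mul_card_le_of_card_bottoms (hX : MutualVisSet (BF d) (X : Set (Vert d)))
    (hd : 0 < d) (h : #(bottoms X) = 2 ^ d) : 2 * #X ≤ 3 * 2 ^ d := by
  have hL := biUnion_linesThrough_eq_univ (isAntichain_bottoms X) h
  have := two_mul_card_sdiff_bottoms_le hX hL hd
  have := card_sdiff_add_card_eq_card (bottoms_subset X)
  omega

theorem bottoms_image_mirror : bottoms (X.image mirror) = (tops X).image mirror := by
  ext z
  simp only [bottoms, tops, mem_filter, mem_image, forall_exists_index, and_imp,
    forall_apply_eq_imp_iff₂]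
  constructor
  · rintro ⟨⟨z, hz, rfl⟩, h⟩
    exact ⟨z, ⟨hz, fun w hw hwz => mirror_injective (h w hw (descends_mirror_iff.2 hwz))⟩,
      rfl⟩
  · rintro ⟨z, ⟨hz, h⟩, rfl⟩
    exact ⟨⟨z, hz, rfl⟩, fun w hw hzw =>
      congrArg mirror (h w hw (descends_mirror_iff.1 hzw))⟩

theorem two_mul_card_le_of_card_tops (hX : MutualVisSet (BF d) (X : Set (Vert d)))
    (hd : 0 < d) (h : #(tops X) = 2 ^ d) : 2 * #X ≤ 3 * 2 ^ d := by
  have hX' : MutualVisSet (BF d) (X.image mirror : Set (Vert d)) := by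
    rw [coe_image]
    exact hX.image_iso mirrorIso
  have := two_mul_card_le_of_card_bottoms hX' hd
    (by rw [bottoms_image_mirror, card_image_of_injective _ mirror_injective, h])
  rwa [card_image_of_injective _ mirror_injective] at this

theorem card_le_of_mutualVisSet (hd : 2 ≤ d) (hX : MutualVisSet (BF d) (X : Set (Vert d))) :
    #X ≤ 2 ^ (d + 1) - 2 := by
  have h4 : 4 ≤ 2 ^ d := by
    calc 4 = 2 ^ 2 := rfl
      _ ≤ 2 ^ d := Nat.pow_le_pow_right (by norm_num) hd
  have hpow : 2 ^ (d + 1) = 2 * 2 ^ d := pow_succ' 2 d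
  have hsplit := (card_le_card (subset_tops_union_bottoms hX)).trans (card_union_le _ _)
  have ht := card_le_of_isAntichain (isAntichain_tops X)
  have hb := card_le_of_isAntichain (isAntichain_bottoms X)
  rcases ht.eq_or_lt with ht | ht
  · have := two_mul_card_le_of_card_tops hX (by omega) ht
    omega
  rcases hb.eq_or_lt with hb | hb
  · have := two_mul_card_le_of_card_bottoms hX (by omega) hb
    omega
  omega

/-! ### Construction -/

theorem isVisiblePair_of_descends {X : Set (Vert d)} {x y m : Vert d} (hx : Descends x m)
    (hy : Descends y m)
    (hlen : ∀ p : (BF d).Walk x y, ((m.1 : ℕ) - x.1) + ((m.1 : ℕ) - y.1) ≤ p.length)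
    (hX : ∀ z ∈ X, Descends z m → Descends x z ∨ Descends y z → z = x ∨ z = y) :
    IsVisiblePair (BF d) X x y := by
  obtain ⟨p, hp⟩ := hx.exists_walk
  obtain ⟨q, hq⟩ := hy.exists_walk
  have := hx.1
  have := hy.1
  have hdist : (p.append q.reverse).length = (BF d).dist x y := by
    obtain ⟨r, hr⟩ := (p.append q.reverse).reachable.exists_walk_length_eq_dist
    have := hlen r
    have := dist_le (p.append q.reverse)
    rw [Walk.length_append, Walk.length_reverse] at this ⊢
    omega
  refine ⟨_, Walk.isPath_of_length_eq_dist _ hdist, hdist, fun z hz hzX => ?_⟩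
  rw [Walk.mem_support_append_iff, Walk.support_reverse, List.mem_reverse] at hz
  rcases hz with hz | hz
  · obtain ⟨hxz, hzm⟩ := descends_of_length_le p (by omega) z hz
    exact hX z hzX hzm (.inl hxz)
  · obtain ⟨hyz, hzm⟩ := descends_of_length_le q (by omega) z hz
    exact hX z hzX hzm (.inr hyz)

def zeroCol (d : ℕ) : Col d := fun _ => false

def outerLevels (d : ℕ) : Finset (Vert d) :=
  (univ.erase (zeroCol d)).image top ∪ (univ.erase (zeroCol d)).image bot

theorem mem_outerLevels {z : Vert d} :
    z ∈ outerLevels d ↔ ∃ c ≠ zeroCol d, top c = z ∨ bot c = z := by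
  simp only [outerLevels, mem_union, mem_image, mem_erase, mem_univ, and_true]
  aesop

theorem card_outerLevels (hd : 0 < d) : #(outerLevels d) = 2 ^ (d + 1) - 2 := by
  have htop : Function.Injective (top (d := d)) := fun _ _ h => (Prod.mk.inj h).2
  have hbot : Function.Injective (bot (d := d)) := fun _ _ h => (Prod.mk.inj h).2
  have hdisj : Disjoint ((univ.erase (zeroCol d)).image top)
      ((univ.erase (zeroCol d)).image bot) := by
    simp only [Finset.disjoint_left, mem_image, not_exists, not_and]
    rintro _ ⟨a, -, rfl⟩ b - h
    have := congrArg (fun z : Vert d => (z.1 : ℕ)) h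
    simp only [top, bot, Fin.val_zero, Fin.val_last] at this
    omega
  rw [outerLevels, card_union_of_disjoint hdisj, card_image_of_injective _ htop,
    card_image_of_injective _ hbot, card_erase_of_mem (mem_univ _)]
  simp only [card_univ, Fintype.card_fun, Fintype.card_bool, Fintype.card_fin, pow_succ]
  have := Nat.one_le_two_pow (n := d)
  omega

theorem isVisiblePair_top_bot (a b : Col d) :
    IsVisiblePair (BF d) (outerLevels d) (top a) (bot b) := by
  refine isVisiblePair_of_descends (descends_top_bot a b) (.refl _)
    (fun p => by simpa [top, bot] using level_le_level_add_length p) fun z hz hzm h => ?_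
  obtain ⟨c, -, rfl | rfl⟩ := mem_outerLevels.1 hz
  · rcases h with h | h
    · exact .inl (h.eq_of_level_eq rfl).symm
    · exact .inr (h.antisymm hzm).symm
  · exact .inr (hzm.eq_of_level_eq rfl)

theorem exists_highest_bit_ne {a b : Col d} (hab : a ≠ b) :
    ∃ k : Fin d, a k ≠ b k ∧ ∀ t : Fin d, (k : ℕ) < t → a t = b t := by
  obtain ⟨t₀, ht₀⟩ := Function.ne_iff.1 hab
  obtain ⟨k, hk, hmax⟩ := (univ.filter fun t => a t ≠ b t).exists_max_image (fun t => (t : ℕ))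
    ⟨t₀, by simpa using ht₀⟩
  simp only [mem_filter, mem_univ, true_and] at hk hmax
  exact ⟨k, hk, fun t hkt => by_contra fun h => absurd (hmax t h) (by omega)⟩

theorem isVisiblePair_top_top (a b : Col d) :
    IsVisiblePair (BF d) (outerLevels d) (top a) (top b) := by
  rcases eq_or_ne a b with rfl | hab
  · exact isVisiblePair_self _ _
  obtain ⟨k, hk, hagree⟩ := exists_highest_bit_ne hab
  -- shortest paths turn at level `k + 1`, at the removed vertex `bot (zeroCol d)` if `k + 1 = d`
  let m : Vert d := (⟨k + 1, by omega⟩, fun t => if (t : ℕ) ≤ k then false else a t)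
  have ham : Descends (top a) m := descends_top_iff.2 fun t ht => by
    simp only [m] at ht ⊢
    rw [if_neg (by omega)]
  have hbm : Descends (top b) m := descends_top_iff.2 fun t ht => by
    simp only [m] at ht ⊢
    rw [if_neg (by omega), hagree t (by omega)]
  refine isVisiblePair_of_descends ham hbm
    (fun p => by simpa [top, m] using length_ge_of_bit_ne p hk) fun z hz hzm hz' => ?_
  obtain ⟨c, hc, rfl | rfl⟩ := mem_outerLevels.1 hz
  · rcases hz' with hz' | hz'
    · exact .inl (hz'.eq_of_level_eq rfl).symm
    · exact .inr (hz'.eq_of_level_eq rfl).symm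
  · exfalso
    have hdk : d ≤ (k : ℕ) + 1 := by simpa [bot, m] using hzm.1
    have hcm : bot c = m := hzm.eq_of_level_eq (by simp only [bot, m, Fin.val_last]; omega)
    refine hc (funext fun t => ?_)
    have := congrArg (fun z : Vert d => z.2 t) hcm
    simp only [bot, m] at this
    rw [this, if_pos (by omega)]
    rfl

theorem image_mirror_outerLevels : (outerLevels d).image mirror = outerLevels d := by
  refine eq_of_subset_of_card_le (image_subset_iff.2 fun z hz => ?_)
    (card_image_of_injective _ mirror_injective).ge
  obtain ⟨c, hc, rfl | rfl⟩ := mem_outerLevels.1 hz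
  all_goals
    refine mem_outerLevels.2 ⟨c ∘ Fin.rev, fun h => hc (funext fun t => ?_), ?_⟩
    simpa [zeroCol] using congrFun h t.rev
  · exact .inr (mirror_top c).symm
  · exact .inl (mirror_bot c).symm

theorem mutualVisSet_outerLevels : MutualVisSet (BF d) (outerLevels d : Set (Vert d)) := by
  intro x hx y hy
  obtain ⟨a, -, rfl | rfl⟩ := mem_outerLevels.1 hx <;>
    obtain ⟨b, -, rfl | rfl⟩ := mem_outerLevels.1 hy
  · exact isVisiblePair_top_top a b
  · exact isVisiblePair_top_bot a b
  · exact (isVisiblePair_top_bot b a).symm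
  · have := (isVisiblePair_top_top (a ∘ Fin.rev) (b ∘ Fin.rev)).image_iso mirrorIso
    rw [coe_mirrorIso, ← coe_image, image_mirror_outerLevels, mirror_top, mirror_top] at this
    simpa [Function.comp_def] using this

end Butterfly

/-- `μ(BF(d)) = 2^{d+1} - 2` for all `d ≥ 2`. -/
theorem mu_BF (d : ℕ) (hd : 2 ≤ d) :
    mutualVisNum (BF d) = 2 ^ (d + 1) - 2 := by
  refine IsGreatest.csSup_eq ⟨⟨_, Butterfly.mutualVisSet_outerLevels, ?_⟩, ?_⟩
  · rw [Set.ncard_coe_finset, Butterfly.card_outerLevels (by omega)]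
  · rintro _ ⟨X, hX, rfl⟩
    obtain ⟨s, rfl⟩ := X.toFinite.exists_finset_coe
    rw [Set.ncard_coe_finset]
    exact Butterfly.card_le_of_mutualVisSet hd hX
end

section
/- In the butterfly BF(d), the set X = L'_0 ∪ L'_d is a total mutual-visibility set, where L'_j consists of vertices [j, i] at level j ∈ {0, d} whose column label i, read as a binary number, is odd with i ≤ 2^{d-1}, or even with i > 2^{d-1}. -/
open SimpleGraph

/-- The value of a column label read as a binary number (position 0 is the
most significant bit). -/
def colVal (d : ℕ) (c : Fin d → Bool) : ℕ :=
  ∑ i : Fin d, if c i then 2 ^ (d - 1 - (i : ℕ)) else 0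

/-- The column condition defining `L'_0` and `L'_d`: the column number is odd
and at most `2^{d-1}`, or even and greater than `2^{d-1}`. -/
def GoodCol (d : ℕ) (c : Fin d → Bool) : Prop :=
  (Odd (colVal d c) ∧ colVal d c ≤ 2 ^ (d - 1)) ∨
  (Even (colVal d c) ∧ 2 ^ (d - 1) < colVal d c)

/-! ### Auxiliary machinery -/

section Aux

/-- The intermediate column on a monotone sweep: bits below `x` already set to
`tgt`, bits at or above `x` still equal to `c`. -/
def mix {d : ℕ} (c tgt : Fin d → Bool) (x : ℕ) : Fin d → Bool :=
  fun k => if (k : ℕ) < x then tgt k else c k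

lemma mix_zero {d : ℕ} (c tgt : Fin d → Bool) : mix c tgt 0 = c :=
  funext fun k => if_neg (Nat.not_lt_zero _)

lemma mix_top {d : ℕ} (c tgt : Fin d → Bool) {x : ℕ} (h : d ≤ x) : mix c tgt x = tgt :=
  funext fun k => if_pos (lt_of_lt_of_le k.isLt h)

lemma goUp_adj {d : ℕ} (c tgt : Fin d → Bool) (x : ℕ) (h : x < d) :
    (BF d).Adj (⟨x, by omega⟩, mix c tgt x) (⟨x+1, by omega⟩, mix c tgt (x+1)) := by
  rw [BF, SimpleGraph.fromRel_adj]
  constructor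
  · intro he
    have := congrArg (fun z => (z.1 : ℕ)) he
    simp at this
  · left
    refine ⟨rfl, ?_⟩
    intro i hi
    simp only [mix]
    have : (i:ℕ) < x ↔ (i:ℕ) < x + 1 := by simp at hi; omega
    by_cases hc : (i:ℕ) < x
    · rw [if_pos hc, if_pos (this.mp hc)]
    · rw [if_neg hc, if_neg (fun hh => hc (this.mpr hh))]

/-- The monotone walk climbing from level `i` to level `i + n`, rewriting the
bits to `tgt` along the way. -/
def goUp {d : ℕ} (c tgt : Fin d → Bool) (i : ℕ) : (n : ℕ) → (h : i + n ≤ d) →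
    (BF d).Walk (⟨i, by omega⟩, mix c tgt i) (⟨i + n, by omega⟩, mix c tgt (i + n))
  | 0, _ => Walk.nil
  | n+1, h => (goUp c tgt i n (by omega)).concat (goUp_adj c tgt (i+n) (by omega))

lemma goUp_length {d : ℕ} (c tgt : Fin d → Bool) (i : ℕ) : ∀ (n : ℕ) (h : i + n ≤ d),
    (goUp c tgt i n h).length = n
  | 0, _ => rfl
  | n+1, h => by
    simp only [goUp, Walk.length_concat, goUp_length c tgt i n]

lemma goUp_support {d : ℕ} (c tgt : Fin d → Bool) (i : ℕ) : ∀ (n : ℕ) (h : i + n ≤ d)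
    (z : Fin (d+1) × (Fin d → Bool)), z ∈ (goUp c tgt i n h).support →
    i ≤ (z.1 : ℕ) ∧ (z.1 : ℕ) ≤ i + n ∧ z.2 = mix c tgt (z.1 : ℕ)
  | 0, h, z, hz => by
    simp only [goUp, Walk.support_nil, List.mem_singleton] at hz
    subst hz; exact ⟨by simp, by simp, rfl⟩
  | n+1, h, z, hz => by
    simp only [goUp, Walk.support_concat, List.concat_eq_append, List.mem_append,
      List.mem_singleton] at hz
    rcases hz with hz | hz
    · obtain ⟨h1, h2, h3⟩ := goUp_support c tgt i n (by omega) z hz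
      exact ⟨h1, by omega, h3⟩
    · subst hz; refine ⟨by simp, by simp, rfl⟩

/-- level of a vertex -/
abbrev lvl {d : ℕ} (z : Fin (d+1) × (Fin d → Bool)) : ℕ := z.1

lemma adj_lvl {d : ℕ} {u v : Fin (d+1) × (Fin d → Bool)} (h : (BF d).Adj u v) :
    (lvl u + 1 = lvl v ∧ ∀ i : Fin d, (i : ℕ) ≠ lvl u → u.2 i = v.2 i) ∨
    (lvl v + 1 = lvl u ∧ ∀ i : Fin d, (i : ℕ) ≠ lvl v → u.2 i = v.2 i) := by
  rw [BF, SimpleGraph.fromRel_adj] at h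
  rcases h.2 with ⟨h1, h2⟩ | ⟨h1, h2⟩
  · exact Or.inl ⟨h1, h2⟩
  · exact Or.inr ⟨h1, fun i hi => (h2 i hi).symm⟩

lemma walk_lvl_bound {d : ℕ} {u v : Fin (d+1) × (Fin d → Bool)} (p : (BF d).Walk u v) :
    lvl v ≤ lvl u + p.length ∧ lvl u ≤ lvl v + p.length := by
  induction p with
  | nil => simp
  | cons h q ih =>
    rcases adj_lvl h with ⟨h1, _⟩ | ⟨h1, _⟩ <;>
      · simp only [Walk.length_cons]; omega

lemma walk_crosses {d : ℕ} {u v : Fin (d+1) × (Fin d → Bool)} (p : (BF d).Walk u v)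
    (i : Fin d) (hne : u.2 i ≠ v.2 i) :
    (∃ z ∈ p.support, lvl z ≤ (i : ℕ)) ∧ (∃ z ∈ p.support, (i : ℕ) + 1 ≤ lvl z) := by
  induction p with
  | nil => exact absurd rfl hne
  | @cons a b c h q ih =>
    by_cases hab : a.2 i = b.2 i
    · obtain ⟨⟨z1, hz1, hl1⟩, ⟨z2, hz2, hl2⟩⟩ := ih (hab ▸ hne)
      exact ⟨⟨z1, by simp [hz1], hl1⟩, ⟨z2, by simp [hz2], hl2⟩⟩
    · rcases adj_lvl h with ⟨h1, h2⟩ | ⟨h1, h2⟩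
      · have : (i : ℕ) = lvl a := by by_contra hc; exact hab (h2 i hc)
        refine ⟨⟨a, by simp, by omega⟩, ⟨b, by simp, by omega⟩⟩
      · have : (i : ℕ) = lvl b := by by_contra hc; exact hab (h2 i hc)
        refine ⟨⟨b, by simp, by omega⟩, ⟨a, by simp, by omega⟩⟩

lemma walk_length_lb {d : ℕ} {u v : Fin (d+1) × (Fin d → Bool)} (p : (BF d).Walk u v)
    (z1 z2 : Fin (d+1) × (Fin d → Bool)) (h1 : z1 ∈ p.support) (h2 : z2 ∈ p.support) :
    min ((lvl u - lvl z1) + (lvl z2 - lvl z1) + (lvl z2 - lvl v))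
      ((lvl z2 - lvl u) + (lvl z2 - lvl z1) + (lvl v - lvl z1)) ≤ p.length := by
  classical
  set q1 := p.takeUntil z1 h1 with hq1
  set q2 := p.dropUntil z1 h1 with hq2
  have hspec : q1.append q2 = p := p.take_spec h1
  have hlen : q1.length + q2.length = p.length := by
    rw [← hspec, Walk.length_append]
  have h2' : z2 ∈ q1.support ∨ z2 ∈ q2.support := by
    rw [← hspec] at h2
    rcases (Walk.mem_support_append_iff _ _).mp h2 with h | h
    · exact Or.inl h
    · exact Or.inr h
  rcases h2' with hm | hm
  · have hsp : (q1.takeUntil z2 hm).append (q1.dropUntil z2 hm) = q1 := q1.take_spec hm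
    have hl1 : (q1.takeUntil z2 hm).length + (q1.dropUntil z2 hm).length = q1.length := by
      have := congrArg Walk.length hsp
      rwa [Walk.length_append] at this
    have b1 := walk_lvl_bound (q1.takeUntil z2 hm)
    have b2 := walk_lvl_bound (q1.dropUntil z2 hm)
    have b3 := walk_lvl_bound q2
    omega
  · have hsp : (q2.takeUntil z2 hm).append (q2.dropUntil z2 hm) = q2 := q2.take_spec hm
    have hl1 : (q2.takeUntil z2 hm).length + (q2.dropUntil z2 hm).length = q2.length := by
      have := congrArg Walk.length hsp
      rwa [Walk.length_append] at this
    have b1 := walk_lvl_bound q1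
    have b2 := walk_lvl_bound (q2.takeUntil z2 hm)
    have b3 := walk_lvl_bound (q2.dropUntil z2 hm)
    omega

lemma sum_lt_pow (n : ℕ) (f : ℕ → ℕ) (hf : ∀ i, i < n → f i ≤ 2^i) :
    ∑ i ∈ Finset.range n, f i < 2^n := by
  induction n with
  | zero => simp
  | succ n ih =>
    rw [Finset.sum_range_succ]
    have h1 : ∑ i ∈ Finset.range n, f i < 2^n := ih (fun i hi => hf i (by omega))
    have h2 : f n ≤ 2^n := hf n (by omega)
    have : 2^(n+1) = 2^n + 2^n := by ring
    omega

lemma colVal_eq_range (d : ℕ) (c : Fin d → Bool) :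
    colVal d c = ∑ i ∈ Finset.range d,
      (if h : i < d then (if c ⟨i, h⟩ then 2 ^ (d - 1 - i) else 0) else 0) := by
  rw [colVal, ← Fin.sum_univ_eq_sum_range]
  exact Finset.sum_congr rfl (fun i _ => by rw [dif_pos i.isLt])

lemma colVal_lt_pow {d : ℕ} (hd : 1 ≤ d) (c : Fin d → Bool)
    (h0 : c ⟨0, hd⟩ = false) : colVal d c < 2 ^ (d - 1) := by
  obtain ⟨e, rfl⟩ : ∃ e, d = e + 1 := ⟨d - 1, by omega⟩
  rw [colVal_eq_range, ← Finset.sum_range_reflect, Finset.sum_range_succ]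
  have h1 : e + 1 - 1 - e = 0 := by omega
  rw [h1, dif_pos (by omega : (0:ℕ) < e + 1)]
  have h2 : c ⟨0, by omega⟩ = false := h0
  rw [h2]
  simp only [Bool.false_eq_true, if_false, add_zero]
  have h3 : e + 1 - 1 = e := rfl
  calc ∑ j ∈ Finset.range e,
        (if h : e + 1 - 1 - j < e + 1 then (if c ⟨e + 1 - 1 - j, h⟩ then 2 ^ (e + 1 - 1 - (e + 1 - 1 - j)) else 0) else 0)
      < 2 ^ e := by
        apply sum_lt_pow
        intro i hi
        rw [dif_pos (by omega)]
        split
        · exact Nat.pow_le_pow_right (by norm_num) (by omega)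
        · exact Nat.zero_le _
    _ ≤ 2 ^ (e + 1 - 1) := by rw [h3]

lemma colVal_flip {d : ℕ} (c c' : Fin d → Bool) (i0 : Fin d) (h1 : c i0 = true)
    (h2 : c' i0 = false) (hoth : ∀ j, j ≠ i0 → c j = c' j) :
    colVal d c = colVal d c' + 2 ^ (d - 1 - (i0 : ℕ)) := by
  rw [colVal, colVal, ← Finset.add_sum_erase _ _ (Finset.mem_univ i0),
    ← Finset.add_sum_erase _ _ (Finset.mem_univ i0), h1, h2]
  rw [Finset.sum_congr rfl (fun j hj => by rw [hoth j (Finset.ne_of_mem_erase hj)])]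
  simp only [Bool.false_eq_true, if_false, if_true, add_zero, zero_add]
  omega

lemma colVal_even {d : ℕ} (hd : 1 ≤ d) (c : Fin d → Bool)
    (h : c ⟨d - 1, by omega⟩ = false) : Even (colVal d c) := by
  rw [even_iff_two_dvd, colVal]
  apply Finset.dvd_sum
  intro i _
  by_cases hc : c i
  · rw [if_pos hc]
    have hne : (i : ℕ) ≠ d - 1 := by
      intro he
      have : i = ⟨d - 1, by omega⟩ := Fin.ext he
      rw [this, h] at hc; exact Bool.noConfusion hc
    have : d - 1 - (i : ℕ) ≥ 1 := by have := i.isLt; omega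
    exact Dvd.dvd.trans (dvd_pow_self 2 (by omega : d - 1 - (i:ℕ) ≠ 0)) dvd_rfl
  · rw [if_neg hc]; exact dvd_zero 2

lemma exists_v0 {d : ℕ} (hd : 1 ≤ d) (f : Bool → Fin d → Bool)
    (h0 : ∀ v, f v ⟨0, hd⟩ = v)
    (hoth : ∀ v v' j, j ≠ (⟨0, hd⟩ : Fin d) → f v j = f v' j) :
    ∃ v, ¬ GoodCol d (f v) := by
  have hE : colVal d (f false) < 2 ^ (d - 1) := colVal_lt_pow hd _ (h0 false)
  have hflip : colVal d (f true) = colVal d (f false) + 2 ^ (d - 1) := by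
    have := colVal_flip (f true) (f false) ⟨0, hd⟩ (h0 true) (h0 false)
      (fun j hj => hoth true false j hj)
    simpa using this
  by_cases hEv : Even (colVal d (f false))
  · refine ⟨false, ?_⟩
    rintro (⟨ho, _⟩ | ⟨_, hgt⟩)
    · rw [Nat.odd_iff] at ho; rw [Nat.even_iff] at hEv; omega
    · omega
  · refine ⟨true, ?_⟩
    rw [Nat.even_iff] at hEv
    have hd2 : 2 ≤ d := by
      by_contra hc
      have : d = 1 := by omega
      subst this
      simp at hE
      omega
    have hpow : 2 ^ (d - 1) % 2 = 0 := by
      have : d - 1 = (d - 2) + 1 := by omega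
      rw [this, pow_succ]
      omega
    rintro (⟨ho, hle⟩ | ⟨hev, _⟩)
    · omega
    · rw [Nat.even_iff] at hev
      rw [hflip] at hev
      omega

lemma exists_w {d : ℕ} (hd : 1 ≤ d) (f : Bool → Fin d → Bool)
    (h0 : ∀ v, f v ⟨d - 1, by omega⟩ = v)
    (hoth : ∀ v v' j, j ≠ (⟨d - 1, by omega⟩ : Fin d) → f v j = f v' j) :
    ∃ v, ¬ GoodCol d (f v) := by
  have hEv : Even (colVal d (f false)) := colVal_even hd _ (h0 false)
  have hflip : colVal d (f true) = colVal d (f false) + 1 := by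
    have := colVal_flip (f true) (f false) ⟨d - 1, by omega⟩ (h0 true) (h0 false)
      (fun j hj => hoth true false j hj)
    simpa using this
  rw [Nat.even_iff] at hEv
  by_cases hgt : 2 ^ (d - 1) < colVal d (f false)
  · refine ⟨true, ?_⟩
    rintro (⟨_, hle⟩ | ⟨hev, _⟩)
    · omega
    · rw [Nat.even_iff, hflip] at hev; omega
  · refine ⟨false, ?_⟩
    rintro (⟨ho, _⟩ | ⟨_, hgt'⟩)
    · rw [Nat.odd_iff] at ho; omega
    · omega

/-- The set `L'_0 ∪ L'_d`. -/
def Xset (d : ℕ) : Set (Fin (d + 1) × (Fin d → Bool)) :=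
  {u : Fin (d + 1) × (Fin d → Bool) | u.1 = 0 ∧ GoodCol d u.2} ∪
  {u : Fin (d + 1) × (Fin d → Bool) | u.1 = Fin.last d ∧ GoodCol d u.2}

lemma vert_eq {d : ℕ} {x y : ℕ} (hx : x < d + 1) (hy : y < d + 1) (h : x = y)
    {cx cy : Fin d → Bool} (hc : cx = cy) :
    ((⟨x, hx⟩ : Fin (d + 1)), cx) = ((⟨y, hy⟩ : Fin (d + 1)), cy) := by
  subst h; subst hc; rfl

lemma mem_Xset {d : ℕ} {z : Fin (d+1) × (Fin d → Bool)} (h : z ∈ Xset d) :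
    ((z.1 : ℕ) = 0 ∨ (z.1 : ℕ) = d) ∧ GoodCol d z.2 := by
  rcases h with ⟨h1, h2⟩ | ⟨h1, h2⟩
  · exact ⟨Or.inl (by rw [h1]; rfl), h2⟩
  · exact ⟨Or.inr (by rw [h1]; exact Fin.val_last d), h2⟩

lemma visPair_symm {V : Type*} {G : SimpleGraph V} {X : Set V} {x y : V}
    (h : IsVisiblePair G X x y) : IsVisiblePair G X y x := by
  obtain ⟨p, hp, hl, hs⟩ := h
  refine ⟨p.reverse, hp.reverse, ?_, ?_⟩
  · rw [Walk.length_reverse, hl, SimpleGraph.dist_comm]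
  · intro z hz hX
    rw [Walk.support_reverse, List.mem_reverse] at hz
    exact (hs z hz hX).symm
    
lemma visible_main {d : ℕ} (hd : 1 ≤ d) (s t : ℕ) (hs : s ≤ d) (ht : t ≤ d) (hst : s ≤ t)
    (c1 c2 : Fin d → Bool) :
    IsVisiblePair (BF d) (Xset d)
      ((⟨s, by omega⟩ : Fin (d+1)), c1) ((⟨t, by omega⟩ : Fin (d+1)), c2) := by
  classical
  set x : Fin (d+1) × (Fin d → Bool) := ((⟨s, by omega⟩ : Fin (d+1)), c1) with hxdef
  set y : Fin (d+1) × (Fin d → Bool) := ((⟨t, by omega⟩ : Fin (d+1)), c2) with hydef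
  have hlvlx : (x.1 : ℕ) = s := rfl
  have hlvly : (y.1 : ℕ) = t := rfl
  by_cases hcc : ∀ j, c1 j = c2 j
  · -- identical columns: straight walk
    have hc : c1 = c2 := funext hcc
    subst hc
    have hmix : ∀ u, mix c1 c1 u = c1 := fun u => funext fun k => by simp [mix]
    set W : (BF d).Walk x y :=
      ((goUp c1 c1 s (t - s) (by omega)).copy
        (vert_eq _ _ rfl (hmix s)) (vert_eq _ _ (by omega) (hmix _))) with hW
    have hWlen : W.length = t - s := by
      rw [hW, Walk.length_copy, goUp_length]
    have hdist : (BF d).dist x y = W.length := by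
      refine le_antisymm (SimpleGraph.dist_le W) ?_
      obtain ⟨p, hp⟩ := Reachable.exists_walk_length_eq_dist ⟨W⟩
      have hb := walk_lvl_bound p
      rw [hWlen, ← hp]
      simp only [lvl] at hb
      omega
    refine ⟨W, W.isPath_of_length_eq_dist hdist.symm, hdist.symm, ?_⟩
    intro z hz hzX
    rw [hW, Walk.support_copy] at hz
    obtain ⟨hl1, hl2, hl3⟩ := goUp_support _ _ _ _ _ z hz
    obtain ⟨hlev, hgood⟩ := mem_Xset hzX
    have hz2 : z.2 = c1 := by rw [hl3, hmix]
    rcases hlev with h0 | hD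
    · left
      have hs0 : s = 0 := by omega
      rw [Prod.ext_iff]
      refine ⟨Fin.ext ?_, ?_⟩
      · rw [hlvlx]; omega
      · exact hz2
    · right
      have htd : t = d := by omega
      rw [Prod.ext_iff]
      refine ⟨Fin.ext ?_, ?_⟩
      · rw [hlvly]; omega
      · exact hz2
  · -- differing columns
    push_neg at hcc
    obtain ⟨j0, hj0⟩ := hcc
    set Dset : Finset (Fin d) := Finset.univ.filter (fun j => c1 j ≠ c2 j) with hDset
    have hne : Dset.Nonempty := ⟨j0, by simp [hDset, hj0]⟩
    set a := Dset.min' hne with ha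
    set b := Dset.max' hne with hb
    set A := (a : ℕ) with hA
    set B := (b : ℕ) with hB
    have haD : c1 a ≠ c2 a := by
      have := Dset.min'_mem hne; simp only [hDset, Finset.mem_filter] at this; exact this.2
    have hbD : c1 b ≠ c2 b := by
      have := Dset.max'_mem hne; simp only [hDset, Finset.mem_filter] at this; exact this.2
    have hrange : ∀ j : Fin d, c1 j ≠ c2 j → A ≤ (j : ℕ) ∧ (j : ℕ) ≤ B := by
      intro j hj
      have hjm : j ∈ Dset := by simp [hDset, hj]
      exact ⟨Dset.min'_le j hjm, Dset.le_max' j hjm⟩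
    have hAd : A < d := a.isLt
    have hBd : B < d := b.isLt
    set m := min A s with hm
    set M := max (B + 1) t with hM
    have hms : m ≤ s := min_le_right _ _
    have hmA : m ≤ A := min_le_left _ _
    have htM : t ≤ M := le_max_right _ _
    have hBM : B + 1 ≤ M := le_max_left _ _
    have hMd : M ≤ d := max_le (by omega) ht
    obtain ⟨v0, hv0⟩ : ∃ v0 : Bool, (m = 0 ∧ 0 < s) →
        ¬ GoodCol d (fun j => if m ≤ (j:ℕ) ∧ (j:ℕ) < s then
            (if (j:ℕ) = 0 then v0 else c2 j) else c1 j) := by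
      by_cases hcase : m = 0 ∧ 0 < s
      · obtain ⟨v, hv⟩ := exists_v0 hd
          (fun v j => if m ≤ (j:ℕ) ∧ (j:ℕ) < s then (if (j:ℕ) = 0 then v else c2 j) else c1 j)
          (fun v => by
            show (if m ≤ (0:ℕ) ∧ (0:ℕ) < s then (if (0:ℕ) = 0 then v else c2 ⟨0, hd⟩)
              else c1 ⟨0, hd⟩) = v
            rw [if_pos ⟨by omega, hcase.2⟩, if_pos rfl])
          (fun v v' j hj => by
            have hjne : (j:ℕ) ≠ 0 := fun h => hj (Fin.ext h)
            simp [hjne])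
        exact ⟨v, fun _ => hv⟩
      · exact ⟨true, fun h => absurd h hcase⟩
    set cbot : Fin d → Bool :=
      fun j => if m ≤ (j:ℕ) ∧ (j:ℕ) < s then (if (j:ℕ) = 0 then v0 else c2 j) else c1 j
      with hcbot
    obtain ⟨w, hw⟩ : ∃ w : Bool, (t ≤ d - 1 ∧ d - 1 < M) →
        ¬ GoodCol d (fun j => if t ≤ (j:ℕ) ∧ ((j:ℕ) < M ∧ (j:ℕ) = d - 1) then w else c2 j) := by
      by_cases hcase : t ≤ d - 1 ∧ d - 1 < M
      · obtain ⟨v, hv⟩ := exists_w hd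
          (fun v j => if t ≤ (j:ℕ) ∧ ((j:ℕ) < M ∧ (j:ℕ) = d - 1) then v else c2 j)
          (fun v => by
            show (if t ≤ (d-1:ℕ) ∧ ((d-1:ℕ) < M ∧ (d-1:ℕ) = d - 1) then v
              else c2 ⟨d - 1, by omega⟩) = v
            rw [if_pos ⟨hcase.1, hcase.2, rfl⟩])
          (fun v v' j hj => by
            have hjne : (j:ℕ) ≠ d - 1 := fun h => hj (Fin.ext h)
            simp [hjne])
        exact ⟨v, fun _ => hv⟩
      · exact ⟨true, fun h => absurd h hcase⟩
    set ctop : Fin d → Bool :=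
      fun j => if t ≤ (j:ℕ) ∧ ((j:ℕ) < M ∧ (j:ℕ) = d - 1) then w else c2 j with hctop
    have hc12 : ∀ j : Fin d, ((j:ℕ) < A ∨ B < (j:ℕ)) → c1 j = c2 j := by
      intro j hj
      by_contra hne'
      have := hrange j hne'
      omega
    have hbot_lo : ∀ j : Fin d, (j:ℕ) < m → cbot j = c1 j := by
      intro j hj; simp only [hcbot]; rw [if_neg (by omega)]
    have hbot_hi : ∀ j : Fin d, s ≤ (j:ℕ) → cbot j = c1 j := by
      intro j hj; simp only [hcbot]; rw [if_neg (by omega)]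
    have htop_lo : ∀ j : Fin d, (j:ℕ) < t → ctop j = c2 j := by
      intro j hj; simp only [hctop]; rw [if_neg (by omega)]
    have htop_hi : ∀ j : Fin d, M ≤ (j:ℕ) → ctop j = c2 j := by
      intro j hj; simp only [hctop]; rw [if_neg (by omega)]
    have E1 : mix cbot c1 m = cbot := funext fun k => by
      by_cases hk : (k:ℕ) < m
      · simp only [mix, if_pos hk]; exact (hbot_lo k hk).symm
      · simp only [mix, if_neg hk]
    have E2 : mix cbot c1 (m + (s - m)) = c1 := funext fun k => by
      have hsm : m + (s - m) = s := by omega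
      rw [hsm]
      by_cases hk : (k:ℕ) < s
      · simp only [mix, if_pos hk]
      · simp only [mix, if_neg hk]; exact hbot_hi k (by omega)
    have E3 : mix cbot ctop m = cbot := funext fun k => by
      by_cases hk : (k:ℕ) < m
      · simp only [mix, if_pos hk]
        rw [htop_lo k (by omega), hbot_lo k hk]
        exact (hc12 k (Or.inl (by omega))).symm
      · simp only [mix, if_neg hk]
    have E4 : mix cbot ctop (m + (M - m)) = ctop := funext fun k => by
      have hmM : m + (M - m) = M := by omega
      rw [hmM]
      by_cases hk : (k:ℕ) < M
      · simp only [mix, if_pos hk]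
      · simp only [mix, if_neg hk]
        rw [hbot_hi k (by omega), htop_hi k (by omega)]
        exact hc12 k (Or.inr (by omega))
    have E5 : mix c2 ctop t = c2 := funext fun k => by
      by_cases hk : (k:ℕ) < t
      · simp only [mix, if_pos hk]; exact htop_lo k hk
      · simp only [mix, if_neg hk]
    have E6 : mix c2 ctop (t + (M - t)) = ctop := funext fun k => by
      have htM' : t + (M - t) = M := by omega
      rw [htM']
      by_cases hk : (k:ℕ) < M
      · simp only [mix, if_pos hk]
      · simp only [mix, if_neg hk]; exact (htop_hi k (by omega)).symm
    set p1 : (BF d).Walk ((⟨m, by omega⟩ : Fin (d+1)), cbot) x :=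
      (goUp cbot c1 m (s - m) (by omega)).copy (vert_eq _ _ rfl E1)
        (vert_eq _ (by omega) (by omega) E2) with hp1
    set p2 : (BF d).Walk ((⟨m, by omega⟩ : Fin (d+1)), cbot) ((⟨M, by omega⟩ : Fin (d+1)), ctop) :=
      (goUp cbot ctop m (M - m) (by omega)).copy (vert_eq _ _ rfl E3)
        (vert_eq _ (by omega) (by omega) E4) with hp2
    set p3 : (BF d).Walk y ((⟨M, by omega⟩ : Fin (d+1)), ctop) :=
      (goUp c2 ctop t (M - t) (by omega)).copy (vert_eq _ _ rfl E5)
        (vert_eq _ (by omega) (by omega) E6) with hp3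
    set W : (BF d).Walk x y := p1.reverse.append (p2.append p3.reverse) with hW
    have hWlen : W.length = (s - m) + ((M - m) + (M - t)) := by
      rw [hW]
      simp only [Walk.length_append, Walk.length_reverse, hp1, hp2, hp3, Walk.length_copy,
        goUp_length]
    have hlb : ∀ p : (BF d).Walk x y, (s - m) + ((M - m) + (M - t)) ≤ p.length := by
      intro p
      obtain ⟨⟨z1, hz1m, hz1l⟩, -⟩ := walk_crosses p a haD
      obtain ⟨-, ⟨z2, hz2m, hz2l⟩⟩ := walk_crosses p b hbD
      have key1 : ∃ z1' ∈ p.support, lvl z1' ≤ m := by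
        rcases le_or_gt (lvl z1) s with h1 | h1
        · exact ⟨z1, hz1m, by omega⟩
        · exact ⟨x, p.start_mem_support, by simp only [lvl]; omega⟩
      have key2 : ∃ z2' ∈ p.support, M ≤ lvl z2' := by
        rcases le_or_gt t (lvl z2) with h2 | h2
        · exact ⟨z2, hz2m, by omega⟩
        · exact ⟨y, p.end_mem_support, by simp only [lvl]; omega⟩
      obtain ⟨z1', hz1'm, hz1'l⟩ := key1
      obtain ⟨z2', hz2'm, hz2'l⟩ := key2
      have hlow := walk_length_lb p z1' z2' hz1'm hz2'm
      simp only [lvl] at hlow hz1'l hz2'l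
      omega
    have hdist : (BF d).dist x y = W.length := by
      refine le_antisymm (SimpleGraph.dist_le W) ?_
      obtain ⟨p, hp⟩ := Reachable.exists_walk_length_eq_dist ⟨W⟩
      rw [hWlen, ← hp]
      exact hlb p
    -- the helpers for the internal-vertex analysis
    have handle0 : ∀ z : Fin (d+1) × (Fin d → Bool),
        (z.1 : ℕ) = 0 → m = 0 → z.2 = cbot → GoodCol d z.2 → z = x := by
      intro z h0 hm0 hz2 hgood
      by_cases hs0 : s = 0
      · rw [Prod.ext_iff]
        refine ⟨Fin.ext ?_, ?_⟩
        · rw [hlvlx]; omega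
        · show z.2 = c1
          rw [hz2]
          funext j
          simp only [hcbot]; rw [if_neg (by omega)]
      · exact absurd (hz2 ▸ hgood) (hv0 ⟨hm0, by omega⟩)
    have handleD : ∀ z : Fin (d+1) × (Fin d → Bool),
        (z.1 : ℕ) = d → M = d → z.2 = ctop → GoodCol d z.2 → z = y := by
      intro z hD hMdd hz2 hgood
      by_cases htd : t = d
      · rw [Prod.ext_iff]
        refine ⟨Fin.ext ?_, ?_⟩
        · rw [hlvly]; omega
        · show z.2 = c2
          rw [hz2]
          funext j
          simp only [hctop]
          rw [if_neg (by push_neg; intro h1; exfalso; have := j.isLt; omega)]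
      · exact absurd (hz2 ▸ hgood) (hw ⟨by omega, by omega⟩)
    refine ⟨W, W.isPath_of_length_eq_dist hdist.symm, hdist.symm, ?_⟩
    intro z hz hzX
    obtain ⟨hlev, hgood⟩ := mem_Xset hzX
    have hsupp : (z ∈ (goUp cbot c1 m (s - m) (by omega)).support) ∨
        (z ∈ (goUp cbot ctop m (M - m) (by omega)).support) ∨
        (z ∈ (goUp c2 ctop t (M - t) (by omega)).support) := by
      rw [hW, Walk.mem_support_append_iff] at hz
      rcases hz with h | h
      · left
        rw [Walk.support_reverse, List.mem_reverse, hp1, Walk.support_copy] at h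
        exact h
      · rw [Walk.mem_support_append_iff] at h
        rcases h with h | h
        · right; left
          rw [hp2, Walk.support_copy] at h
          exact h
        · right; right
          rw [Walk.support_reverse, List.mem_reverse, hp3, Walk.support_copy] at h
          exact h
    rcases hsupp with h | h | h
    · obtain ⟨hl1, hl2, hl3⟩ := goUp_support _ _ _ _ _ z h
      rcases hlev with h0 | hDd
      · left
        refine handle0 z h0 (by omega) ?_ hgood
        rw [hl3, h0, mix_zero]
      · -- level d on the descending pass: only possible if s = d
        left
        have hsd : s = d := by omega
        rw [Prod.ext_iff]
        refine ⟨Fin.ext ?_, ?_⟩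
        · rw [hlvlx]; omega
        · show z.2 = c1
          rw [hl3, hDd]
          exact mix_top _ _ (le_refl d)
    · obtain ⟨hl1, hl2, hl3⟩ := goUp_support _ _ _ _ _ z h
      rcases hlev with h0 | hDd
      · left
        refine handle0 z h0 (by omega) ?_ hgood
        rw [hl3, h0, mix_zero]
      · right
        refine handleD z hDd (by omega) ?_ hgood
        rw [hl3, hDd]
        exact mix_top _ _ (le_refl d)
    · obtain ⟨hl1, hl2, hl3⟩ := goUp_support _ _ _ _ _ z h
      rcases hlev with h0 | hDd
      · right
        have ht0 : t = 0 := by omega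
        rw [Prod.ext_iff]
        refine ⟨Fin.ext ?_, ?_⟩
        · rw [hlvly]; omega
        · show z.2 = c2
          rw [hl3, h0, mix_zero]
      · right
        refine handleD z hDd (by omega) ?_ hgood
        rw [hl3, hDd]
        exact mix_top _ _ (le_refl d)

end Aux

/-- `L'_0 ∪ L'_d` is a total mutual-visibility set of `BF(d)`. -/
theorem bf_totalMutualVisSet (d : ℕ) (hd : 1 ≤ d) :
    TotalMutualVisSet (BF d)
      ({u : Fin (d + 1) × (Fin d → Bool) | u.1 = 0 ∧ GoodCol d u.2} ∪
       {u : Fin (d + 1) × (Fin d → Bool) | u.1 = Fin.last d ∧ GoodCol d u.2}) := by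
  intro x y
  obtain ⟨xl, xc⟩ := x
  obtain ⟨yl, yc⟩ := y
  rcases le_or_gt (xl : ℕ) (yl : ℕ) with h | h
  · exact visible_main hd xl yl (Nat.lt_succ_iff.mp xl.isLt) (Nat.lt_succ_iff.mp yl.isLt) h xc yc
  · exact visPair_symm
      (visible_main hd yl xl (Nat.lt_succ_iff.mp yl.isLt) (Nat.lt_succ_iff.mp xl.isLt)
        (le_of_lt h) yc xc)
end
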